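/- arXiv:2506.21241 — 4 statements merged into one kernel-verified Lean document; each statement's English description precedes it below -/
import Mathlib

section
/- With the setup of the cotangent lift of a point transformation Q, the inner product of the two gradients transforms as: H̄_p̄ · H̄_q̄ = H_p · H_q + δ, where δ = (∂H/∂p_i)(∂H/∂p_k) · p_l · (∂(Q⁻¹)^l/∂q̄^β) · (∂²Q^β/∂q^k∂qⁱ) (all evaluated at corresponding points). In particular, if Q is affine then δ ≡ 0 and the first-order elementary Hamiltonian H_p H_q is invariant under the induced canonical transformation. -/
/-- `∂F^α/∂x^i` at `x`. -/
noncomputable def pd {d : ℕ} (F : (Fin d → ℝ) → (Fin d → ℝ)) (x : Fin d → ℝ)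
    (α i : Fin d) : ℝ :=
  fderiv ℝ F x (Pi.single i 1) α

/-- `∂²F^β/∂x^k ∂x^i` at `x`. -/
noncomputable def pd2 {d : ℕ} (F : (Fin d → ℝ) → (Fin d → ℝ)) (x : Fin d → ℝ)
    (β k i : Fin d) : ℝ :=
  fderiv ℝ (fun x' => fderiv ℝ F x' (Pi.single i 1) β) x (Pi.single k 1)

/-- Partial derivative of a Hamiltonian `H q p` with respect to the momentum `p_i`. -/
noncomputable def Hp {d : ℕ} (H : (Fin d → ℝ) → (Fin d → ℝ) → ℝ)
    (q p : Fin d → ℝ) (i : Fin d) : ℝ :=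
  fderiv ℝ (H q) p (Pi.single i 1)

/-- Partial derivative of a Hamiltonian `H q p` with respect to the coordinate `qⁱ`. -/
noncomputable def Hq {d : ℕ} (H : (Fin d → ℝ) → (Fin d → ℝ) → ℝ)
    (q p : Fin d → ℝ) (i : Fin d) : ℝ :=
  fderiv ℝ (fun q' => H q' p) q (Pi.single i 1)

/-- The transformed momenta of the cotangent lift: `p̄_α = p_i ∂(Q⁻¹)ⁱ/∂q̄^α`. -/
noncomputable def pbar {d : ℕ} (Qinv : (Fin d → ℝ) → (Fin d → ℝ))
    (qbar p : Fin d → ℝ) (α : Fin d) : ℝ :=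
  ∑ i, p i * pd Qinv qbar i α

/-- The transformed Hamiltonian `H̄(q̄,p̄) = H(Q⁻¹(q̄), p̄_α ∂Q^α/∂qⁱ)`. -/
noncomputable def Hbar {d : ℕ} (H : (Fin d → ℝ) → (Fin d → ℝ) → ℝ)
    (Q Qinv : (Fin d → ℝ) → (Fin d → ℝ)) (qbar pbar' : Fin d → ℝ) : ℝ :=
  H (Qinv qbar) (fun i => ∑ α, pbar' α * pd Q (Qinv qbar) α i)

/-- The correction term
`δ = H_{p_i} H_{p_k} p_l (∂(Q⁻¹)^l/∂q̄^β)(∂²Q^β/∂q^k∂qⁱ)` in original coordinates. -/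
noncomputable def deltaHpHq {d : ℕ} (H : (Fin d → ℝ) → (Fin d → ℝ) → ℝ)
    (Q Qinv : (Fin d → ℝ) → (Fin d → ℝ)) (q p : Fin d → ℝ) : ℝ :=
  ∑ i, ∑ k, ∑ l, ∑ β,
    Hp H q p i * Hp H q p k * p l * pd Qinv (Q q) l β * pd2 Q q β k i

/- ---------------- auxiliary lemmas ---------------- -/

theorem clm_apply_eq_sum {d : ℕ} {E : Type*} [NormedAddCommGroup E] [NormedSpace ℝ E]
    (f : (Fin d → ℝ) →L[ℝ] E) (v : Fin d → ℝ) :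
    f v = ∑ i, v i • f (Pi.single i 1) := by
  conv_lhs => rw [← Finset.univ_sum_single v]
  rw [map_sum]
  refine Finset.sum_congr rfl fun i _ => ?_
  have : Pi.single i (v i) = (v i) • (Pi.single i 1 : Fin d → ℝ) := by
    ext j; by_cases h : j = i <;> simp [Pi.single_apply, h]
  rw [this, map_smul]

theorem jac_identity {d : ℕ} (Q Qinv : (Fin d → ℝ) → (Fin d → ℝ))
    (hQ : Differentiable ℝ Q) (hQinv : Differentiable ℝ Qinv)
    (hleft : Function.LeftInverse Qinv Q) (x : Fin d → ℝ) (i j : Fin d) :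
    ∑ β, pd Q x β j * pd Qinv (Q x) i β = if i = j then 1 else 0 := by
  have hcomp : fderiv ℝ (Qinv ∘ Q) x = (fderiv ℝ Qinv (Q x)).comp (fderiv ℝ Q x) :=
    fderiv_comp x (hQinv (Q x)) (hQ x)
  have hid : Qinv ∘ Q = id := funext hleft
  rw [hid, fderiv_id] at hcomp
  have key := congrArg (fun L : (Fin d → ℝ) →L[ℝ] (Fin d → ℝ) => L (Pi.single j 1) i) hcomp
  simp only [ContinuousLinearMap.coe_id', id_eq, ContinuousLinearMap.comp_apply] at key
  have expand := clm_apply_eq_sum ((ContinuousLinearMap.proj i).comp (fderiv ℝ Qinv (Q x)))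
      (fderiv ℝ Q x (Pi.single j 1))
  simp only [ContinuousLinearMap.comp_apply, ContinuousLinearMap.proj_apply,
    smul_eq_mul] at expand
  have : fderiv ℝ Qinv (Q x) (fderiv ℝ Q x (Pi.single j 1)) i
      = ∑ β, pd Q x β j * pd Qinv (Q x) i β := by
    rw [expand]; exact Finset.sum_congr rfl fun β _ => rfl
  rw [← this, ← key, Pi.single_apply]

theorem contract_lemma {d : ℕ} (A B : Fin d → Fin d → ℝ) (hp : Fin d → ℝ)
    (hJ : ∀ i j, ∑ β, A β j * B i β = if i = j then 1 else 0)
    (c : Fin d → ℝ) :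
    ∑ β, (∑ i, A β i * hp i) * (∑ k, B k β * c k) = ∑ k, hp k * c k := by
  calc ∑ β, (∑ i, A β i * hp i) * (∑ k, B k β * c k)
      = ∑ β, ∑ i, ∑ k, (hp i * c k) * (A β i * B k β) := by
        refine Finset.sum_congr rfl fun β _ => ?_
        rw [Finset.sum_mul_sum]
        exact Finset.sum_congr rfl fun i _ => Finset.sum_congr rfl fun k _ => by ring
    _ = ∑ i, ∑ k, (hp i * c k) * ∑ β, A β i * B k β := by
        rw [Finset.sum_comm]
        refine Finset.sum_congr rfl fun i _ => ?_
        rw [Finset.sum_comm]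
        exact Finset.sum_congr rfl fun k _ => (Finset.mul_sum _ _ _).symm
    _ = ∑ k, hp k * c k := by
        simp only [hJ, mul_ite, mul_one, mul_zero]
        simp [Finset.sum_ite_eq]

theorem algebra_lemma {d : ℕ} (A B : Fin d → Fin d → ℝ) (D : Fin d → Fin d → Fin d → ℝ)
    (hp hq p : Fin d → ℝ)
    (hJ : ∀ i j, ∑ β, A β j * B i β = if i = j then 1 else 0) :
    ∑ β, (∑ i, A β i * hp i) *
      ((∑ i, B i β * hq i) +
        ∑ i, (∑ α, (∑ l, p l * B l α) * ∑ k, B k β * D α k i) * hp i)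
    = (∑ i, hp i * hq i) + ∑ i, ∑ k, ∑ l, ∑ β, hp i * hp k * p l * B l β * D β k i := by
  have expand : ∀ β, ∑ i, (∑ α, (∑ l, p l * B l α) * ∑ k, B k β * D α k i) * hp i
      = ∑ k, B k β * (∑ i, ∑ α, (∑ l, p l * B l α) * D α k i * hp i) := by
    intro β
    have e1 : ∀ i, (∑ α, (∑ l, p l * B l α) * ∑ k, B k β * D α k i) * hp i
        = ∑ k, B k β * ((∑ α, (∑ l, p l * B l α) * D α k i * hp i)) := by
      intro i
      calc (∑ α, (∑ l, p l * B l α) * ∑ k, B k β * D α k i) * hp i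
          = ∑ α, ∑ k, B k β * ((∑ l, p l * B l α) * D α k i * hp i) := by
            rw [Finset.sum_mul]
            refine Finset.sum_congr rfl fun α _ => ?_
            rw [Finset.mul_sum, Finset.sum_mul]
            exact Finset.sum_congr rfl fun k _ => by ring
        _ = ∑ k, B k β * ((∑ α, (∑ l, p l * B l α) * D α k i * hp i)) := by
            rw [Finset.sum_comm]
            exact Finset.sum_congr rfl fun k _ => (Finset.mul_sum _ _ _).symm
    simp only [e1]
    rw [Finset.sum_comm]
    exact Finset.sum_congr rfl fun k _ => (Finset.mul_sum _ _ _).symm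
  simp only [mul_add, Finset.sum_add_distrib, expand]
  rw [contract_lemma A B hp hJ, contract_lemma A B hp hJ]
  congr 1
  calc ∑ k, hp k * ∑ i, ∑ α, (∑ l, p l * B l α) * D α k i * hp i
      = ∑ k, ∑ i, ∑ α, ∑ l, hp i * hp k * p l * B l α * D α k i := by
        refine Finset.sum_congr rfl fun k _ => ?_
        rw [Finset.mul_sum]
        refine Finset.sum_congr rfl fun i _ => ?_
        rw [Finset.mul_sum]
        refine Finset.sum_congr rfl fun α _ => ?_
        rw [Finset.sum_mul, Finset.sum_mul, Finset.mul_sum]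
        exact Finset.sum_congr rfl fun l _ => by ring
    _ = ∑ i, ∑ k, ∑ l, ∑ β, hp i * hp k * p l * B l β * D β k i := by
        rw [Finset.sum_comm]
        refine Finset.sum_congr rfl fun i _ => ?_
        refine Finset.sum_congr rfl fun k _ => ?_
        rw [Finset.sum_comm]

/- ---------------- main theorem ---------------- -/

/-- under the cotangent lift of a point transformation `Q`,
`H̄_p̄ · H̄_q̄ = H_p · H_q + δ` at corresponding points, and if `Q` is affine
(vanishing second derivative) then `δ ≡ 0`, so the first-order elementary Hamiltonian
`H_p H_q` is invariant. -/
theorem elementary_hamiltonian_transformation {d : ℕ}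
    (Q Qinv : (Fin d → ℝ) → (Fin d → ℝ))
    (hQ : ContDiff ℝ (⊤ : ℕ∞) Q) (hQinv : ContDiff ℝ (⊤ : ℕ∞) Qinv)
    (hleft : Function.LeftInverse Qinv Q) (hright : Function.RightInverse Qinv Q)
    (H : (Fin d → ℝ) → (Fin d → ℝ) → ℝ)
    (hH : ContDiff ℝ (⊤ : ℕ∞) (fun z : (Fin d → ℝ) × (Fin d → ℝ) => H z.1 z.2)) :
    (∀ q p : Fin d → ℝ,
      (∑ α, Hp (Hbar H Q Qinv) (Q q) (pbar Qinv (Q q) p) α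
            * Hq (Hbar H Q Qinv) (Q q) (pbar Qinv (Q q) p) α)
        = (∑ i, Hp H q p i * Hq H q p i) + deltaHpHq H Q Qinv q p) ∧
    ((∀ q : Fin d → ℝ, fderiv ℝ (fun q' => fderiv ℝ Q q') q = 0) →
      ∀ q p : Fin d → ℝ, deltaHpHq H Q Qinv q p = 0) := by
  have hdQ : Differentiable ℝ Q := hQ.differentiable (by simp)
  have hdQi : Differentiable ℝ Qinv := hQinv.differentiable (by simp)
  have hdH2 : Differentiable ℝ (fun z : (Fin d → ℝ) × (Fin d → ℝ) => H z.1 z.2) :=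
    hH.differentiable (by simp)
  have hdF2 : Differentiable ℝ (fun x => fderiv ℝ Q x) :=
    (hQ.fderiv_right (m := 1) (by exact WithTop.coe_le_coe.mpr (le_top : ((1 + 1 : ℕ) : ℕ∞) ≤ ⊤))).differentiable one_ne_zero
  -- second derivatives in terms of the derivative of fderiv Q
  have hpd2 : ∀ (q : Fin d → ℝ) (γ k i : Fin d),
      pd2 Q q γ k i
        = (fderiv ℝ (fun x => fderiv ℝ Q x) q (Pi.single k 1)) (Pi.single i 1) γ := by
    intro q γ k i
    have hc : HasFDerivAt
        (fun x' => ((ContinuousLinearMap.proj γ : (Fin d → ℝ) →L[ℝ] ℝ).comp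
          (ContinuousLinearMap.apply ℝ (Fin d → ℝ) (Pi.single i 1 : Fin d → ℝ)))
          ((fun x => fderiv ℝ Q x) x'))
        (((ContinuousLinearMap.proj γ : (Fin d → ℝ) →L[ℝ] ℝ).comp
          (ContinuousLinearMap.apply ℝ (Fin d → ℝ) (Pi.single i 1 : Fin d → ℝ))).comp
          (fderiv ℝ (fun x => fderiv ℝ Q x) q)) q :=
      (ContinuousLinearMap.hasFDerivAt _).comp q (hdF2 q).hasFDerivAt
    have : pd2 Q q γ k i = fderiv ℝ
        (fun x' => ((ContinuousLinearMap.proj γ : (Fin d → ℝ) →L[ℝ] ℝ).comp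
          (ContinuousLinearMap.apply ℝ (Fin d → ℝ) (Pi.single i 1 : Fin d → ℝ)))
          ((fun x => fderiv ℝ Q x) x')) q (Pi.single k 1) := rfl
    rw [this, hc.fderiv]
    rfl
  have hdHsnd : ∀ a : Fin d → ℝ, Differentiable ℝ (H a) := by
    intro a
    have h := hdH2.comp ((differentiable_const a).prodMk differentiable_id)
    have : Differentiable ℝ (fun p' : Fin d → ℝ => H a p') := by
      simpa [Function.comp_def] using h
    exact this
  constructor
  · intro q p
    have hQQ : Qinv (Q q) = q := hleft q
    set P : Fin d → ℝ := pbar Qinv (Q q) p with hP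
    have hJ : ∀ i j, ∑ β, pd Q q β j * pd Qinv (Q q) i β = if i = j then 1 else 0 :=
      fun i j => jac_identity Q Qinv hdQ hdQi hleft q i j
    -- momentum recovery
    have hmom : (fun i => ∑ α, P α * pd Q q α i) = p := by
      funext i
      calc ∑ α, P α * pd Q q α i
          = ∑ α, ∑ l, p l * (pd Q q α i * pd Qinv (Q q) l α) := by
            refine Finset.sum_congr rfl fun α _ => ?_
            rw [hP]; simp only [pbar]; rw [Finset.sum_mul]
            exact Finset.sum_congr rfl fun l _ => by ring
        _ = ∑ l, p l * ∑ α, pd Q q α i * pd Qinv (Q q) l α := by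
            rw [Finset.sum_comm]
            exact Finset.sum_congr rfl fun l _ => (Finset.mul_sum _ _ _).symm
        _ = p i := by
            simp only [hJ, mul_ite, mul_one, mul_zero]
            simp [Finset.sum_ite_eq']
    -- total-derivative expansion of H at (q, p)
    have hfst : ∀ u : Fin d → ℝ,
        fderiv ℝ (fun z : (Fin d → ℝ) × (Fin d → ℝ) => H z.1 z.2) (q, p) (u, 0)
          = fderiv ℝ (fun q' => H q' p) q u := by
      intro u
      have hφ : HasFDerivAt (fun q' : Fin d → ℝ => (q', p))
          ((ContinuousLinearMap.id ℝ (Fin d → ℝ)).prod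
            (0 : (Fin d → ℝ) →L[ℝ] (Fin d → ℝ))) q :=
        (hasFDerivAt_id q).prodMk (hasFDerivAt_const p q)
      have hc := ((hdH2 (q, p)).hasFDerivAt.comp q hφ)
      have hceq : fderiv ℝ (fun q' => H q' p) q
          = (fderiv ℝ (fun z : (Fin d → ℝ) × (Fin d → ℝ) => H z.1 z.2) (q, p)).comp
            ((ContinuousLinearMap.id ℝ (Fin d → ℝ)).prod 0) := hc.fderiv
      rw [hceq]
      simp
    have hsnd : ∀ v : Fin d → ℝ,
        fderiv ℝ (fun z : (Fin d → ℝ) × (Fin d → ℝ) => H z.1 z.2) (q, p) (0, v)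
          = fderiv ℝ (H q) p v := by
      intro v
      have hφ : HasFDerivAt (fun p' : Fin d → ℝ => (q, p'))
          ((0 : (Fin d → ℝ) →L[ℝ] (Fin d → ℝ)).prod
            (ContinuousLinearMap.id ℝ (Fin d → ℝ))) p :=
        (hasFDerivAt_const q p).prodMk (hasFDerivAt_id p)
      have hc := ((hdH2 (q, p)).hasFDerivAt.comp p hφ)
      have hceq : fderiv ℝ (H q) p
          = (fderiv ℝ (fun z : (Fin d → ℝ) × (Fin d → ℝ) => H z.1 z.2) (q, p)).comp
            ((0 : (Fin d → ℝ) →L[ℝ] (Fin d → ℝ)).prod (ContinuousLinearMap.id ℝ (Fin d → ℝ)))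
        := hc.fderiv
      rw [hceq]
      simp
    have hD2exp : ∀ u v : Fin d → ℝ,
        fderiv ℝ (fun z : (Fin d → ℝ) × (Fin d → ℝ) => H z.1 z.2) (q, p) (u, v)
          = (∑ i, u i * Hq H q p i) + ∑ i, v i * Hp H q p i := by
      intro u v
      have hsplit : ((u, v) : (Fin d → ℝ) × (Fin d → ℝ)) = (u, 0) + (0, v) := by
        simp [Prod.ext_iff]
      rw [hsplit, map_add, hfst u, hsnd v]
      congr 1
      · rw [clm_apply_eq_sum (fderiv ℝ (fun q' => H q' p) q) u]
        simp only [Hq, smul_eq_mul]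
      · rw [clm_apply_eq_sum (fderiv ℝ (H q) p) v]
        simp only [Hp, smul_eq_mul]
    -- the linear map p' ↦ (fun i => ∑ γ, p' γ * pd Q q γ i)
    set L : (Fin d → ℝ) →L[ℝ] (Fin d → ℝ) :=
      LinearMap.toContinuousLinearMap
        ((Matrix.of fun i γ => pd Q q γ i).mulVecLin) with hLdef
    have hLv : ∀ v : Fin d → ℝ, L v = fun i => ∑ γ, v γ * pd Q q γ i := by
      intro v; funext i
      simp only [hLdef, LinearMap.coe_toContinuousLinearMap', Matrix.mulVecLin_apply,
        Matrix.mulVec, Matrix.of_apply, dotProduct]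
      exact Finset.sum_congr rfl fun γ _ => mul_comm _ _
    have hLP : L P = p := by rw [hLv]; exact hmom
    have hfunHbar : Hbar H Q Qinv (Q q) = fun p' => H q (L p') := by
      funext p'
      simp only [Hbar, hQQ, hLv]
    have hHpbar : ∀ α, Hp (Hbar H Q Qinv) (Q q) P α = ∑ i, pd Q q α i * Hp H q p i := by
      intro α
      have hd : HasFDerivAt (fun p' => H q (L p'))
          ((fderiv ℝ (H q) (L P)).comp (L : (Fin d → ℝ) →L[ℝ] (Fin d → ℝ))) P :=
        ((hdHsnd q (L P)).hasFDerivAt.comp P L.hasFDerivAt)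
      have heq : Hp (Hbar H Q Qinv) (Q q) P α
          = fderiv ℝ (fun p' => H q (L p')) P (Pi.single α 1) := by
        simp only [Hp, hfunHbar]
      rw [heq, hd.fderiv, ContinuousLinearMap.comp_apply, hLP]
      rw [clm_apply_eq_sum (fderiv ℝ (H q) p) (L (Pi.single α 1))]
      refine Finset.sum_congr rfl fun i _ => ?_
      have hLα : L (Pi.single α 1) i = pd Q q α i := by
        rw [hLv]
        simp [Pi.single_apply, ite_mul, Finset.sum_ite_eq']
      rw [smul_eq_mul, hLα]
      rfl
    -- the continuous linear evaluation map for the momentum part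
    set ψ : ((Fin d → ℝ) →L[ℝ] (Fin d → ℝ)) →L[ℝ] (Fin d → ℝ) :=
      ContinuousLinearMap.pi fun i => ∑ γ, P γ • ((ContinuousLinearMap.proj γ).comp
        (ContinuousLinearMap.apply ℝ (Fin d → ℝ) (Pi.single i 1 : Fin d → ℝ))) with hψdef
    have hψ : ∀ T : (Fin d → ℝ) →L[ℝ] (Fin d → ℝ),
        ψ T = fun i => ∑ γ, P γ * T (Pi.single i 1) γ := by
      intro T; funext i
      simp [hψdef, ContinuousLinearMap.sum_apply]
    have hψp : ψ (fderiv ℝ Q q) = p := by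
      rw [hψ]; exact hmom
    set Dg : (Fin d → ℝ) →L[ℝ] (Fin d → ℝ) :=
      ψ.comp ((fderiv ℝ (fun x => fderiv ℝ Q x) q).comp (fderiv ℝ Qinv (Q q))) with hDg
    have hg : HasFDerivAt (fun q' => ψ (fderiv ℝ Q (Qinv q'))) Dg (Q q) := by
      have h1 : HasFDerivAt (fun q' => fderiv ℝ Q (Qinv q'))
          ((fderiv ℝ (fun x => fderiv ℝ Q x) q).comp (fderiv ℝ Qinv (Q q))) (Q q) := by
        have h := (hdF2 (Qinv (Q q))).hasFDerivAt.comp (Q q) (hdQi (Q q)).hasFDerivAt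
        rw [hQQ] at h
        exact h
      exact ψ.hasFDerivAt.comp (Q q) h1
    set Dφ := (fderiv ℝ Qinv (Q q)).prod Dg with hDφ
    have hφ : HasFDerivAt (fun q' => (Qinv q', ψ (fderiv ℝ Q (Qinv q')))) Dφ (Q q) :=
      (hdQi (Q q)).hasFDerivAt.prodMk hg
    have hφval : ((Qinv (Q q), ψ (fderiv ℝ Q (Qinv (Q q)))) : (Fin d → ℝ) × (Fin d → ℝ))
        = (q, p) := by
      rw [hQQ, hψp]
    have hH2at : HasFDerivAt (fun z : (Fin d → ℝ) × (Fin d → ℝ) => H z.1 z.2)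
        (fderiv ℝ (fun z : (Fin d → ℝ) × (Fin d → ℝ) => H z.1 z.2) (q, p))
        ((Qinv (Q q), ψ (fderiv ℝ Q (Qinv (Q q))))) := by
      rw [hφval]; exact (hdH2 (q, p)).hasFDerivAt
    have hf : HasFDerivAt (fun q' => Hbar H Q Qinv q' P)
        ((fderiv ℝ (fun z : (Fin d → ℝ) × (Fin d → ℝ) => H z.1 z.2) (q, p)).comp Dφ)
        (Q q) := by
      have hcomp := hH2at.comp (Q q) hφ
      have hfeq : (fun q' => Hbar H Q Qinv q' P)
          = fun q' => H (Qinv q') (ψ (fderiv ℝ Q (Qinv q'))) := by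
        funext q'
        simp only [Hbar, pd, hψ]
      rw [hfeq]
      exact hcomp
    have hHqbar : ∀ β, Hq (Hbar H Q Qinv) (Q q) P β
        = (∑ i, pd Qinv (Q q) i β * Hq H q p i)
          + ∑ i, (∑ γ, (∑ l, p l * pd Qinv (Q q) l γ)
              * ∑ k, pd Qinv (Q q) k β * pd2 Q q γ k i) * Hp H q p i := by
      intro β
      have heq : Hq (Hbar H Q Qinv) (Q q) P β
          = fderiv ℝ (fun q' => Hbar H Q Qinv q' P) (Q q) (Pi.single β 1) := rfl
      rw [heq, hf.fderiv, ContinuousLinearMap.comp_apply]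
      have hDφval : Dφ (Pi.single β 1)
          = (fderiv ℝ Qinv (Q q) (Pi.single β 1),
             ψ (fderiv ℝ (fun x => fderiv ℝ Q x) q (fderiv ℝ Qinv (Q q) (Pi.single β 1)))) := by
        simp [hDφ, hDg]
      rw [hDφval,
        hD2exp (fderiv ℝ Qinv (Q q) (Pi.single β 1))
          (ψ (fderiv ℝ (fun x => fderiv ℝ Q x) q (fderiv ℝ Qinv (Q q) (Pi.single β 1))))]
      congr 1
      refine Finset.sum_congr rfl fun i _ => ?_
      congr 1
      rw [hψ]
      refine Finset.sum_congr rfl fun γ _ => ?_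
      congr 1
      have hx := clm_apply_eq_sum
        ((((ContinuousLinearMap.proj γ).comp
          (ContinuousLinearMap.apply ℝ (Fin d → ℝ) (Pi.single i 1 : Fin d → ℝ)))).comp
          (fderiv ℝ (fun x => fderiv ℝ Q x) q))
        (fderiv ℝ Qinv (Q q) (Pi.single β 1))
      simp only [ContinuousLinearMap.comp_apply, ContinuousLinearMap.apply_apply,
        ContinuousLinearMap.proj_apply, smul_eq_mul] at hx
      rw [hx]
      refine Finset.sum_congr rfl fun k _ => ?_
      rw [hpd2 q γ k i]
      rfl
    -- final assembly
    have final := algebra_lemma (fun β j => pd Q q β j) (fun i β => pd Qinv (Q q) i β)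
      (fun γ k i => pd2 Q q γ k i) (Hp H q p) (Hq H q p) p hJ
    calc ∑ α, Hp (Hbar H Q Qinv) (Q q) P α * Hq (Hbar H Q Qinv) (Q q) P α
        = ∑ β, (∑ i, pd Q q β i * Hp H q p i) *
            ((∑ i, pd Qinv (Q q) i β * Hq H q p i)
              + ∑ i, (∑ γ, (∑ l, p l * pd Qinv (Q q) l γ)
                  * ∑ k, pd Qinv (Q q) k β * pd2 Q q γ k i) * Hp H q p i) := by
          exact Finset.sum_congr rfl fun β _ => by rw [hHpbar, hHqbar]
      _ = (∑ i, Hp H q p i * Hq H q p i) + deltaHpHq H Q Qinv q p := by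
          rw [final]
          rfl
  · intro h0 q p
    have hz : ∀ γ k i, pd2 Q q γ k i = 0 := by
      intro γ k i
      rw [hpd2, h0 q]
      simp
    simp only [deltaHpHq, hz, mul_zero, Finset.sum_const_zero]
end

section
/- Let H be a smooth Hamiltonian with cyclic coordinate q¹ (i.e. ∂H/∂q¹ ≡ 0, so p₁ is a first integral), and let Q be a smooth point transformation with induced canonical transformation and correction term δ = H_{p_i} H_{p_k} p_l (∂(Q⁻¹)^l/∂q̄^β)(∂²Q^β/∂q^k∂qⁱ). Then the Poisson bracket of the transformed first-order elementary Hamiltonian with p₁ satisfies {H̄_p̄·H̄_q̄, p₁} = ∂δ/∂q¹ (expressed in original coordinates). Consequently, the symplectic Euler method applied in the transformed coordinates preserves p₁ up to O(h²) if and only if ∂δ/∂q¹ ≡ 0. -/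
/-- The transformed elementary Hamiltonian `H̄_p̄ · H̄_q̄` expressed in original coordinates. -/
noncomputable def GElem {d : ℕ} (H : (Fin d → ℝ) → (Fin d → ℝ) → ℝ)
    (Q Qinv : (Fin d → ℝ) → (Fin d → ℝ)) (q p : Fin d → ℝ) : ℝ :=
  ∑ α, Hp (Hbar H Q Qinv) (Q q) (pbar Qinv (Q q) p) α
        * Hq (Hbar H Q Qinv) (Q q) (pbar Qinv (Q q) p) α

open ContinuousLinearMap

lemma basis_expand {d : ℕ} (v : Fin d → ℝ) :
    v = ∑ i, v i • (Pi.single i 1 : Fin d → ℝ) := by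
  ext j
  rw [Finset.sum_apply, Finset.sum_eq_single j] <;>
    simp +contextual [Pi.single_apply, eq_comm]

lemma clm_basis {d : ℕ} {F : Type*} [NormedAddCommGroup F] [NormedSpace ℝ F]
    (L : (Fin d → ℝ) →L[ℝ] F) (v : Fin d → ℝ) :
    L v = ∑ i, v i • L (Pi.single i 1) := by
  conv_lhs => rw [basis_expand v]
  simp [map_sum]

section main
variable {d : ℕ} {Q Qinv : (Fin d → ℝ) → (Fin d → ℝ)}
  (hQ : ContDiff ℝ (⊤ : ℕ∞) Q) (hQinv : ContDiff ℝ (⊤ : ℕ∞) Qinv)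
  (hleft : Function.LeftInverse Qinv Q)
  {H : (Fin d → ℝ) → (Fin d → ℝ) → ℝ}
  (hH : ContDiff ℝ (⊤ : ℕ∞) (fun z : (Fin d → ℝ) × (Fin d → ℝ) => H z.1 z.2))
  (q p : Fin d → ℝ)

include hQ hQinv hleft in
lemma jac_inv_comp (k l : Fin d) :
    ∑ α, pd Q q α k * pd Qinv (Q q) l α = (Pi.single k 1 : Fin d → ℝ) l := by
  have h : (fderiv ℝ Qinv (Q q)).comp (fderiv ℝ Q q) = ContinuousLinearMap.id ℝ _ := by
    have h2 := fderiv_comp (𝕜 := ℝ) q ((hQinv.differentiable (by simp)) (Q q))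
      ((hQ.differentiable (by simp)) q)
    rw [show (Qinv ∘ Q) = _root_.id from funext hleft] at h2
    rw [fderiv_id] at h2
    exact h2.symm
  have h2 : fderiv ℝ Qinv (Q q) (fderiv ℝ Q q (Pi.single k 1)) = Pi.single k 1 := by
    have := congrArg (fun (L : (Fin d → ℝ) →L[ℝ] (Fin d → ℝ)) => L (Pi.single k 1)) h
    simpa using this
  calc ∑ α, pd Q q α k * pd Qinv (Q q) l α
      = (∑ α, (fderiv ℝ Q q (Pi.single k 1)) α • (fderiv ℝ Qinv (Q q)) (Pi.single α 1)) l := by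
        rw [Finset.sum_apply]; exact Finset.sum_congr rfl fun α _ => by simp [pd, mul_comm]
    _ = (fderiv ℝ Qinv (Q q) (fderiv ℝ Q q (Pi.single k 1))) l := by rw [← clm_basis]
    _ = (Pi.single k 1 : Fin d → ℝ) l := by rw [h2]

include hQ hQinv hleft in
lemma momenta_recover :
    (fun i => ∑ α, pbar Qinv (Q q) p α * pd Q (Qinv (Q q)) α i) = p := by
  funext i
  rw [hleft q]
  calc ∑ α, pbar Qinv (Q q) p α * pd Q q α i
      = ∑ α, ∑ l, p l * (pd Q q α i * pd Qinv (Q q) l α) := by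
        refine Finset.sum_congr rfl fun α _ => ?_
        rw [pbar, Finset.sum_mul]
        exact Finset.sum_congr rfl fun l _ => by ring
    _ = ∑ l, p l * ∑ α, pd Q q α i * pd Qinv (Q q) l α := by
        rw [Finset.sum_comm]; simp [Finset.mul_sum]
    _ = p i := by
        rw [Finset.sum_congr rfl fun l _ => by
          rw [jac_inv_comp hQ hQinv hleft q i l]]
        rw [Finset.sum_eq_single i] <;> simp +contextual [Pi.single_apply, eq_comm]

include hH in
lemma H_snd_contDiff : ContDiff ℝ (⊤ : ℕ∞) (H q) :=
  hH.comp ((contDiff_const (c := q)).prodMk contDiff_id)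

include hH in
lemma H_fst_contDiff : ContDiff ℝ (⊤ : ℕ∞) (fun x => H x p) :=
  hH.comp (contDiff_id.prodMk (contDiff_const (c := p)))

include hH in
lemma fderiv_fst_eq (u : Fin d → ℝ) :
    fderiv ℝ (fun x => H x p) q u
      = fderiv ℝ (fun z : (Fin d → ℝ) × (Fin d → ℝ) => H z.1 z.2) (q, p) (u, 0) := by
  have hW := ((hH.differentiable (by simp)) (q, p)).hasFDerivAt
  have h1 : HasFDerivAt (fun x => H x p)
      ((fderiv ℝ (fun z : (Fin d → ℝ) × (Fin d → ℝ) => H z.1 z.2) (q, p)).comp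
        (inl ℝ _ _)) q := hW.comp (g := fun z : (Fin d → ℝ) × (Fin d → ℝ) => H z.1 z.2) (f := fun x => (x, p)) q (hasFDerivAt_prodMk_left q p)
  rw [h1.fderiv]; simp

include hH in
lemma fderiv_snd_eq (v : Fin d → ℝ) :
    fderiv ℝ (H q) p v
      = fderiv ℝ (fun z : (Fin d → ℝ) × (Fin d → ℝ) => H z.1 z.2) (q, p) (0, v) := by
  have hW := ((hH.differentiable (by simp)) (q, p)).hasFDerivAt
  have h1 : HasFDerivAt (H q)
      ((fderiv ℝ (fun z : (Fin d → ℝ) × (Fin d → ℝ) => H z.1 z.2) (q, p)).comp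
        (inr ℝ _ _)) p := hW.comp p (hasFDerivAt_prodMk_right q p)
  rw [h1.fderiv]; simp

include hQ in
lemma pd2_eq (β k i : Fin d) :
    pd2 Q q β k i = ((fderiv ℝ (fderiv ℝ Q) q) (Pi.single k 1)) (Pi.single i 1) β := by
  let E : ((Fin d → ℝ) →L[ℝ] (Fin d → ℝ)) →L[ℝ] ℝ :=
    (ContinuousLinearMap.proj β).comp (ContinuousLinearMap.apply ℝ (Fin d → ℝ) (Pi.single i 1))
  have hD : HasFDerivAt (fderiv ℝ Q) (fderiv ℝ (fderiv ℝ Q) q) q :=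
    (((hQ.fderiv_right (by simp) : ContDiff ℝ (⊤ : ℕ∞) (fderiv ℝ Q)).differentiable (by simp)) q).hasFDerivAt
  have h1 : HasFDerivAt (fun x' => E (fderiv ℝ Q x'))
      (E.comp (fderiv ℝ (fderiv ℝ Q) q)) q := E.hasFDerivAt.comp q hD
  have h2 : (fun x' => fderiv ℝ Q x' (Pi.single i 1) β) = fun x' => E (fderiv ℝ Q x') := rfl
  rw [pd2, h2, h1.fderiv]
  rfl

include hQ hQinv hleft hH in
lemma Hp_Hbar (α : Fin d) :
    Hp (Hbar H Q Qinv) (Q q) (pbar Qinv (Q q) p) α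
      = ∑ k, pd Q q α k * Hp H q p k := by
  set pb := pbar Qinv (Q q) p with hpb
  let L : (Fin d → ℝ) →L[ℝ] (Fin d → ℝ) :=
    ContinuousLinearMap.pi (fun i => ∑ β, (pd Q q β i) • (ContinuousLinearMap.proj β))
  have hL : ∀ x, L x = fun i => ∑ β, x β * pd Q q β i := by
    intro x; funext i
    simp [L, ContinuousLinearMap.pi_apply, ContinuousLinearMap.sum_apply, mul_comm]
  have hfun : Hbar H Q Qinv (Q q) = fun p' => H q (L p') := by
    funext p'
    rw [Hbar, hleft q, hL]
  have hLpb : L pb = p := by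
    rw [hL]
    have := momenta_recover hQ hQinv hleft q p
    rw [hleft q] at this; exact this
  have hdiff : HasFDerivAt (H q) (fderiv ℝ (H q) p) (L pb) := by
    rw [hLpb]
    exact (((H_snd_contDiff hH q).differentiable (by simp)) p).hasFDerivAt
  have hcomp : HasFDerivAt (fun p' => H q (L p')) ((fderiv ℝ (H q) p).comp L) pb :=
    hdiff.comp pb L.hasFDerivAt
  have hkey : Hp (Hbar H Q Qinv) (Q q) pb α
      = ((fderiv ℝ (H q) p).comp L) (Pi.single α 1) := by
    rw [Hp, hfun, hcomp.fderiv]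
  rw [hkey]
  have hLα : L (Pi.single α 1) = fun i => pd Q q α i := by
    rw [hL]; funext i
    rw [Finset.sum_eq_single α] <;> simp +contextual [Pi.single_apply]
  rw [ContinuousLinearMap.comp_apply, hLα, clm_basis]
  exact Finset.sum_congr rfl fun k _ => by rw [smul_eq_mul]; rfl

include hQ hQinv hleft hH in
lemma Hq_Hbar (α : Fin d) :
    Hq (Hbar H Q Qinv) (Q q) (pbar Qinv (Q q) p) α
      = (∑ l, pd Qinv (Q q) l α * Hq H q p l)
        + ∑ i, Hp H q p i *
            (∑ β, pbar Qinv (Q q) p β * (∑ k, pd Qinv (Q q) k α * pd2 Q q β k i)) := by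
  set pb := pbar Qinv (Q q) p with hpb
  set B := fderiv ℝ Qinv (Q q) with hB
  set D2Q := fderiv ℝ (fderiv ℝ Q) q with hD2Q
  set W := fderiv ℝ (fun z : (Fin d → ℝ) × (Fin d → ℝ) => H z.1 z.2) (q, p) with hW
  let Φ : ((Fin d → ℝ) →L[ℝ] (Fin d → ℝ)) →L[ℝ] (Fin d → ℝ) :=
    ContinuousLinearMap.pi (fun i => ∑ β, pb β •
      ((ContinuousLinearMap.proj β).comp (ContinuousLinearMap.apply ℝ (Fin d → ℝ) (Pi.single i 1))))
  have hΦ : ∀ M : (Fin d → ℝ) →L[ℝ] (Fin d → ℝ),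
      Φ M = fun i => ∑ β, pb β * M (Pi.single i 1) β := by
    intro M; funext i
    simp [Φ, ContinuousLinearMap.pi_apply, ContinuousLinearMap.sum_apply]
  set g2 : (Fin d → ℝ) → (Fin d → ℝ) :=
    fun qb' => fun i => ∑ β, pb β * pd Q (Qinv qb') β i with hg2def
  have hg2Φ : g2 = fun qb' => Φ (fderiv ℝ Q (Qinv qb')) := by
    funext qb'; rw [hΦ]; rfl
  -- derivative of g2
  have hQinvD : HasFDerivAt Qinv B (Q q) :=
    ((hQinv.differentiable (by simp)) (Q q)).hasFDerivAt
  have hDQ : HasFDerivAt (fderiv ℝ Q) D2Q (Qinv (Q q)) := by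
    rw [hleft q]
    exact (((hQ.fderiv_right (by simp) : ContDiff ℝ (⊤ : ℕ∞) (fderiv ℝ Q)).differentiable (by simp)) q).hasFDerivAt
  have hg2 : HasFDerivAt g2 (Φ.comp (D2Q.comp B)) (Q q) := by
    rw [hg2Φ]
    exact Φ.hasFDerivAt.comp (Q q) (hDQ.comp (Q q) hQinvD)
  -- derivative of the pair
  have hpair : HasFDerivAt (fun qb' => (Qinv qb', g2 qb'))
      (B.prod (Φ.comp (D2Q.comp B))) (Q q) := hQinvD.prodMk hg2
  -- g2 at Q q is p
  have hg2p : g2 (Q q) = p := momenta_recover hQ hQinv hleft q p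
  have hpairval : (Qinv (Q q), g2 (Q q)) = (q, p) := by rw [hleft q, hg2p]
  have hHtot : HasFDerivAt (fun z : (Fin d → ℝ) × (Fin d → ℝ) => H z.1 z.2) W
      (Qinv (Q q), g2 (Q q)) := by
    rw [hpairval]
    exact ((hH.differentiable (by simp)) (q, p)).hasFDerivAt
  have hcomp : HasFDerivAt (fun qb' => H (Qinv qb') (g2 qb'))
      (W.comp (B.prod (Φ.comp (D2Q.comp B)))) (Q q) := hHtot.comp (g := fun z : (Fin d → ℝ) × (Fin d → ℝ) => H z.1 z.2) (f := fun qb' => (Qinv qb', g2 qb')) (Q q) hpair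
  have hfun : (fun qb' => Hbar H Q Qinv qb' pb) = fun qb' => H (Qinv qb') (g2 qb') := rfl
  have hkey : Hq (Hbar H Q Qinv) (Q q) pb α
      = W (B (Pi.single α 1), (Φ.comp (D2Q.comp B)) (Pi.single α 1)) := by
    rw [Hq, hfun, hcomp.fderiv]; rfl
  rw [hkey]
  have hsplit : W (B (Pi.single α 1), (Φ.comp (D2Q.comp B)) (Pi.single α 1))
      = W (B (Pi.single α 1), 0) + W (0, (Φ.comp (D2Q.comp B)) (Pi.single α 1)) := by
    rw [← map_add]
    congr 1
    simp
  rw [hsplit]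
  congr 1
  · -- first part
    rw [← fderiv_fst_eq hH q p, clm_basis]
    exact Finset.sum_congr rfl fun l _ => by rw [smul_eq_mul]; rfl
  · -- second part
    rw [← fderiv_snd_eq hH q p, clm_basis]
    refine Finset.sum_congr rfl fun i _ => ?_
    rw [smul_eq_mul, mul_comm]
    congr 1
    -- (Φ (D2Q (B e_α))) i = ∑ β, pb β * ∑ k, pd Qinv (Q q) k α * pd2 Q q β k i
    rw [ContinuousLinearMap.comp_apply, ContinuousLinearMap.comp_apply, hΦ]
    refine Finset.sum_congr rfl fun β _ => ?_
    congr 1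
    -- D2Q (B e_α) (e_i) β = ∑ k, pd Qinv (Q q) k α * pd2 Q q β k i
    rw [clm_basis D2Q (B (Pi.single α 1))]
    rw [ContinuousLinearMap.sum_apply, Finset.sum_apply]
    refine Finset.sum_congr rfl fun k _ => ?_
    rw [ContinuousLinearMap.smul_apply, Pi.smul_apply, smul_eq_mul,
      pd2_eq hQ q β k i]
    rfl

end main

section main2
variable {d : ℕ} {Q Qinv : (Fin d → ℝ) → (Fin d → ℝ)}
  (hQ : ContDiff ℝ (⊤ : ℕ∞) Q) (hQinv : ContDiff ℝ (⊤ : ℕ∞) Qinv)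
  (hleft : Function.LeftInverse Qinv Q)
  {H : (Fin d → ℝ) → (Fin d → ℝ) → ℝ}
  (hH : ContDiff ℝ (⊤ : ℕ∞) (fun z : (Fin d → ℝ) × (Fin d → ℝ) => H z.1 z.2))
  (q p : Fin d → ℝ)

include hQ hQinv hleft hH in
lemma GElem_split :
    GElem H Q Qinv q p
      = (∑ m, Hp H q p m * Hq H q p m) + deltaHpHq H Q Qinv q p := by
  have hx := Hp_Hbar hQ hQinv hleft hH q p
  have hy := Hq_Hbar hQ hQinv hleft hH q p
  set a : Fin d → Fin d → ℝ := fun α k => pd Q q α k with ha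
  set b : Fin d → Fin d → ℝ := fun l α => pd Qinv (Q q) l α with hb
  set x : Fin d → ℝ := fun k => Hp H q p k with hxdef
  set y : Fin d → ℝ := fun l => Hq H q p l with hydef
  set t : Fin d → Fin d → Fin d → ℝ := fun β k i => pd2 Q q β k i with ht
  set pb : Fin d → ℝ := pbar Qinv (Q q) p with hpb
  have hcollapse : ∀ (k m : Fin d), ∑ α, a α k * b m α = if m = k then 1 else 0 := by
    intro k m
    rw [jac_inv_comp hQ hQinv hleft q k m, Pi.single_apply]
  have h1 : GElem H Q Qinv q p
      = ∑ α, (∑ k, a α k * x k) *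
          ((∑ l, b l α * y l) + ∑ i, x i * (∑ β, pb β * (∑ m, b m α * t β m i))) := by
    rw [GElem]
    exact Finset.sum_congr rfl fun α _ => by rw [hx α, hy α]
  rw [h1]
  have hexp : ∀ α : Fin d, (∑ k, a α k * x k) *
          ((∑ l, b l α * y l) + ∑ i, x i * (∑ β, pb β * (∑ m, b m α * t β m i)))
      = (∑ k, ∑ l, (x k * y l) * (a α k * b l α))
        + ∑ k, ∑ i, ∑ β, ∑ m, (x k * x i * pb β * t β m i) * (a α k * b m α) := by
    intro α
    rw [mul_add]
    congr 1
    · rw [Finset.sum_mul_sum]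
      exact Finset.sum_congr rfl fun k _ => Finset.sum_congr rfl fun l _ => by ring
    · rw [Finset.sum_mul_sum]
      refine Finset.sum_congr rfl fun k _ => Finset.sum_congr rfl fun i _ => ?_
      simp only [Finset.mul_sum]
      exact Finset.sum_congr rfl fun β _ => Finset.sum_congr rfl fun m _ => by ring
  rw [Finset.sum_congr rfl fun α _ => hexp α]
  rw [Finset.sum_add_distrib]
  congr 1
  · -- first term collapses
    rw [Finset.sum_comm]
    refine Finset.sum_congr rfl fun k _ => ?_
    rw [Finset.sum_comm]
    have h2 : ∀ l : Fin d, ∑ α, x k * y l * (a α k * b l α)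
        = (x k * y l) * (if l = k then 1 else 0) := by
      intro l
      rw [← Finset.mul_sum, hcollapse]
    rw [Finset.sum_congr rfl fun l _ => h2 l]
    rw [Finset.sum_eq_single k] <;> simp +contextual [x, y]
  · -- second term is delta
    rw [Finset.sum_comm]
    have hinner : ∀ k : Fin d, ∑ α, ∑ i, ∑ β, ∑ m, x k * x i * pb β * t β m i * (a α k * b m α)
        = ∑ i, ∑ β, x k * x i * pb β * t β k i := by
      intro k
      rw [Finset.sum_comm]
      refine Finset.sum_congr rfl fun i _ => ?_
      rw [Finset.sum_comm]
      refine Finset.sum_congr rfl fun β _ => ?_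
      rw [Finset.sum_comm]
      have h3 : ∀ m : Fin d, ∑ α, x k * x i * pb β * t β m i * (a α k * b m α)
          = (x k * x i * pb β * t β m i) * (if m = k then 1 else 0) := fun m => by
        rw [← Finset.mul_sum, hcollapse]
      rw [Finset.sum_congr rfl fun m _ => h3 m]
      rw [Finset.sum_eq_single k] <;> simp +contextual
    rw [Finset.sum_congr rfl fun k _ => hinner k, deltaHpHq]
    rw [Finset.sum_comm]
    refine Finset.sum_congr rfl fun k _ => ?_
    refine Finset.sum_congr rfl fun i _ => ?_
    conv_rhs => rw [Finset.sum_comm]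
    refine Finset.sum_congr rfl fun β _ => ?_
    have hpbβ : pb β = ∑ l, p l * b l β := rfl
    rw [hpbβ]
    simp only [Finset.sum_mul, Finset.mul_sum]
    exact Finset.sum_congr rfl fun l _ => by ring

end main2

section final
variable {d : ℕ} {Q Qinv : (Fin d → ℝ) → (Fin d → ℝ)}
  (hQ : ContDiff ℝ (⊤ : ℕ∞) Q) (hQinv : ContDiff ℝ (⊤ : ℕ∞) Qinv)
  {H : (Fin d → ℝ) → (Fin d → ℝ) → ℝ}
  (hH : ContDiff ℝ (⊤ : ℕ∞) (fun z : (Fin d → ℝ) × (Fin d → ℝ) => H z.1 z.2))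

include hH in
lemma Hp_contDiff (p : Fin d → ℝ) (m : Fin d) :
    ContDiff ℝ (⊤ : ℕ∞) (fun q' => Hp H q' p m) := by
  have h1 : ContDiff ℝ (⊤ : ℕ∞) (fun q' => fderiv ℝ (H q') p) :=
    hH.fderiv (contDiff_const (c := p)) (by simp)
  exact h1.clm_apply contDiff_const

include hH in
lemma Hq_contDiff (p : Fin d → ℝ) (m : Fin d) :
    ContDiff ℝ (⊤ : ℕ∞) (fun q' => Hq H q' p m) := by
  have h1 : ContDiff ℝ (⊤ : ℕ∞) (fun q' => fderiv ℝ (fun x => H x p) q') :=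
    (H_fst_contDiff hH p).fderiv_right (by simp)
  exact h1.clm_apply contDiff_const

include hQ hQinv in
lemma pdQinv_contDiff (l β : Fin d) :
    ContDiff ℝ (⊤ : ℕ∞) (fun q' => pd Qinv (Q q') l β) := by
  have h1 : ContDiff ℝ (⊤ : ℕ∞) (fun q' => fderiv ℝ Qinv (Q q')) :=
    (hQinv.fderiv_right (by simp)).comp hQ
  have h2 : ContDiff ℝ (⊤ : ℕ∞) (fun q' => fderiv ℝ Qinv (Q q') (Pi.single β 1)) :=
    h1.clm_apply contDiff_const
  exact (ContinuousLinearMap.proj (R := ℝ) (φ := fun _ : Fin d => ℝ) l).contDiff.comp h2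

include hQ in
lemma pd2_contDiff (β k i : Fin d) :
    ContDiff ℝ (⊤ : ℕ∞) (fun q' => pd2 Q q' β k i) := by
  have heq : (fun q' => pd2 Q q' β k i)
      = fun q' => ((fderiv ℝ (fderiv ℝ Q) q') (Pi.single k 1)) (Pi.single i 1) β :=
    funext fun q' => pd2_eq hQ q' β k i
  rw [heq]
  have h1 : ContDiff ℝ (⊤ : ℕ∞) (fun q' => fderiv ℝ (fderiv ℝ Q) q') :=
    (hQ.fderiv_right (m := ((⊤ : ℕ∞) : WithTop ℕ∞)) (by simp)).fderiv_right (by simp)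
  have h2 : ContDiff ℝ (⊤ : ℕ∞) (fun q' => (fderiv ℝ (fderiv ℝ Q) q') (Pi.single k 1)) :=
    h1.clm_apply contDiff_const
  have h3 : ContDiff ℝ (⊤ : ℕ∞)
      (fun q' => (fderiv ℝ (fderiv ℝ Q) q') (Pi.single k 1) (Pi.single i 1)) :=
    h2.clm_apply contDiff_const
  exact (ContinuousLinearMap.proj (R := ℝ) (φ := fun _ : Fin d => ℝ) β).contDiff.comp h3

include hQ hQinv hH in
lemma delta_contDiff (p : Fin d → ℝ) :
    ContDiff ℝ (⊤ : ℕ∞) (fun q' => deltaHpHq H Q Qinv q' p) := by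
  have : (fun q' => deltaHpHq H Q Qinv q' p)
      = fun q' => ∑ i, ∑ k, ∑ l, ∑ β,
          Hp H q' p i * Hp H q' p k * p l * pd Qinv (Q q') l β * pd2 Q q' β k i := rfl
  rw [this]
  refine ContDiff.sum fun i _ => ContDiff.sum fun k _ => ContDiff.sum fun l _ =>
    ContDiff.sum fun β _ => ?_
  exact ((((Hp_contDiff hH p i).mul (Hp_contDiff hH p k)).mul contDiff_const).mul
    (pdQinv_contDiff hQ hQinv l β)).mul (pd2_contDiff hQ β k i)

include hH in
lemma key_contDiff (p : Fin d → ℝ) :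
    ContDiff ℝ (⊤ : ℕ∞) (fun q' => ∑ m, Hp H q' p m * Hq H q' p m) :=
  ContDiff.sum fun m _ => (Hp_contDiff hH p m).mul (Hq_contDiff hH p m)

variable (i₁ : Fin d) (hcyclic : ∀ q p : Fin d → ℝ, Hq H q p i₁ = 0)

include hH hcyclic in
lemma H_translate (t : ℝ) (q' p' : Fin d → ℝ) :
    H (q' + t • (Pi.single i₁ 1 : Fin d → ℝ)) p' = H q' p' := by
  set e : Fin d → ℝ := Pi.single i₁ 1 with he
  have hfd : Differentiable ℝ (fun x => H x p') := (H_fst_contDiff hH p').differentiable (by simp)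
  have hcurve : ∀ s : ℝ, HasDerivAt (fun s' : ℝ => q' + s' • e) e s := fun s => by
    simpa using ((hasDerivAt_id s).smul_const e).const_add q'
  have hf : ∀ s : ℝ, HasDerivAt (fun s' : ℝ => H (q' + s' • e) p') 0 s := by
    intro s
    have h1 := (hfd (q' + s • e)).hasFDerivAt.comp_hasDerivAt s (hcurve s)
    have h2 : fderiv ℝ (fun x => H x p') (q' + s • e) e = 0 := hcyclic (q' + s • e) p'
    rwa [h2] at h1
  have hconst : (fun s : ℝ => H (q' + s • e) p') t = (fun s : ℝ => H (q' + s • e) p') 0 :=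
    is_const_of_deriv_eq_zero (fun s => (hf s).differentiableAt)
      (fun s => (hf s).deriv) t 0
  simpa using hconst

include hH hcyclic in
lemma key_translate (t : ℝ) (q' p : Fin d → ℝ) :
    (∑ m, Hp H (q' + t • (Pi.single i₁ 1 : Fin d → ℝ)) p m
        * Hq H (q' + t • (Pi.single i₁ 1 : Fin d → ℝ)) p m)
      = ∑ m, Hp H q' p m * Hq H q' p m := by
  set e : Fin d → ℝ := Pi.single i₁ 1 with he
  have hHfun : H (q' + t • e) = H q' := funext fun p' => H_translate hH i₁ hcyclic t q' p'
  refine Finset.sum_congr rfl fun m _ => ?_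
  have h1 : Hp H (q' + t • e) p m = Hp H q' p m := by rw [Hp, Hp, hHfun]
  have h2 : Hq H (q' + t • e) p m = Hq H q' p m := by
    have hfd : Differentiable ℝ (fun x => H x p) := (H_fst_contDiff hH p).differentiable (by simp)
    have h3 : HasFDerivAt (fun x => H (x + t • e) p)
        ((fderiv ℝ (fun x => H x p) (q' + t • e)).comp (ContinuousLinearMap.id ℝ _)) q' := by
      have h4 : HasFDerivAt (fun x : Fin d → ℝ => x + t • e) (ContinuousLinearMap.id ℝ _) q' :=
        (hasFDerivAt_id q').add_const (t • e)
      exact (hfd (q' + t • e)).hasFDerivAt.comp q' h4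
    have h5 : (fun x => H (x + t • e) p) = fun x => H x p :=
      funext fun x => H_translate hH i₁ hcyclic t x p
    rw [h5] at h3
    rw [Hq, Hq, h3.fderiv, ContinuousLinearMap.comp_id]
  rw [h1, h2]

include hH hcyclic in
lemma key_fderiv_zero (q p : Fin d → ℝ) :
    fderiv ℝ (fun q' => ∑ m, Hp H q' p m * Hq H q' p m) q (Pi.single i₁ 1) = 0 := by
  set e : Fin d → ℝ := Pi.single i₁ 1 with he
  set key : (Fin d → ℝ) → ℝ := fun q' => ∑ m, Hp H q' p m * Hq H q' p m with hkey
  have hcurve : HasDerivAt (fun s : ℝ => q + s • e) e 0 := by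
    simpa using ((hasDerivAt_id (0:ℝ)).smul_const e).const_add q
  have hkd : DifferentiableAt ℝ key (q + (0:ℝ) • e) := by
    simpa using (key_contDiff hH p).differentiable (by simp) (q : Fin d → ℝ)
  have h1 : HasDerivAt (fun s : ℝ => key (q + s • e)) (fderiv ℝ key (q + (0:ℝ) • e) e) 0 :=
    HasFDerivAt.comp_hasDerivAt (l := key) (f := fun s : ℝ => q + s • e) 0 hkd.hasFDerivAt hcurve
  have h2 : (fun s : ℝ => key (q + s • e)) = fun _ => key q :=
    funext fun s => key_translate hH i₁ hcyclic s q p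
  rw [h2] at h1
  have h3 : fderiv ℝ key (q + (0:ℝ) • e) e = 0 := by
    have := (hasDerivAt_const (0:ℝ) (key q)).unique h1
    exact this.symm
  simpa using h3

end final

/-- if `q¹` is cyclic for `H` (so `p₁` is a first integral), then
`{H̄_p̄·H̄_q̄, p₁} = ∂δ/∂q¹` in the original coordinates; consequently the symplectic Euler
method in the transformed coordinates preserves `p₁` up to `O(h²)` (i.e. the bracket of the
first-order term of the distorted Hamiltonian with `p₁` vanishes) iff `∂δ/∂q¹ ≡ 0`. -/
theorem cyclic_first_integral_obstruction {d : ℕ}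
    (Q Qinv : (Fin d → ℝ) → (Fin d → ℝ))
    (hQ : ContDiff ℝ (⊤ : ℕ∞) Q) (hQinv : ContDiff ℝ (⊤ : ℕ∞) Qinv)
    (hleft : Function.LeftInverse Qinv Q) (hright : Function.RightInverse Qinv Q)
    (H : (Fin d → ℝ) → (Fin d → ℝ) → ℝ)
    (hH : ContDiff ℝ (⊤ : ℕ∞) (fun z : (Fin d → ℝ) × (Fin d → ℝ) => H z.1 z.2))
    (i₁ : Fin d) (hcyclic : ∀ q p : Fin d → ℝ, Hq H q p i₁ = 0) :
    (∀ q p : Fin d → ℝ,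
      fderiv ℝ (fun q' => GElem H Q Qinv q' p) q (Pi.single i₁ 1)
        = fderiv ℝ (fun q' => deltaHpHq H Q Qinv q' p) q (Pi.single i₁ 1)) ∧
    ((∀ q p : Fin d → ℝ,
        fderiv ℝ (fun q' => GElem H Q Qinv q' p) q (Pi.single i₁ 1) = 0) ↔
      (∀ q p : Fin d → ℝ,
        fderiv ℝ (fun q' => deltaHpHq H Q Qinv q' p) q (Pi.single i₁ 1) = 0)) := by
  have hkey0 : ∀ q p : Fin d → ℝ,
      fderiv ℝ (fun q' => GElem H Q Qinv q' p) q (Pi.single i₁ 1)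
        = fderiv ℝ (fun q' => deltaHpHq H Q Qinv q' p) q (Pi.single i₁ 1) := by
    intro q p
    have hsplit : (fun q' => GElem H Q Qinv q' p)
        = fun q' => (∑ m, Hp H q' p m * Hq H q' p m) + deltaHpHq H Q Qinv q' p :=
      funext fun q' => GElem_split hQ hQinv hleft hH q' p
    rw [hsplit]
    rw [fderiv_fun_add ((key_contDiff hH p).differentiable (by simp) q)
      ((delta_contDiff hQ hQinv hH p).differentiable (by simp) q)]
    rw [ContinuousLinearMap.add_apply, key_fderiv_zero hH i₁ hcyclic q p, zero_add]
  exact ⟨hkey0, ⟨fun h q p => (hkey0 q p).symm.trans (h q p),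
    fun h q p => (hkey0 q p).trans (h q p)⟩⟩
end

section
/- For the Hamiltonian H(r, p_r, p_θ) = (1/2)(p_r² + 2p_θ²/r²) on the half-plane r > 0, and the (non-affine) point transformation from polar to Cartesian coordinates, the elementary Hamiltonian H_p·H_q is invariant: the transformed quantity H̄_p̄·H̄_q̄ computed in Cartesian coordinates equals H_p·H_q = (∂H/∂p_r)(∂H/∂r) = p_r · (−2p_θ²/r³), at all corresponding phase-space points. That is, δ = 0 for this Hamiltonian despite the transformation being non-affine. -/
/-! In Cartesian variables `H̄_p·H̄_q = -2 L² (q·p) / |q|⁴`, where `L = x p_y - y p_x` is the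
angular momentum. The cotangent lift of polar coordinates carries `L` to `p_θ`, `q·p` to `r p_r`
and `|q|²` to `r²`, which gives `p_r · (-2 p_θ² / r³)`. -/

noncomputable def HbarCart (x y px py : ℝ) : ℝ :=
  (1 / 2) * (px ^ 2 + py ^ 2) + (1 / 2) * (x * py - y * px) ^ 2 / (x ^ 2 + y ^ 2)

theorem HasDerivAt.hbarCart {x y px py : ℝ → ℝ} {x' y' px' py' t : ℝ}
    (hx : HasDerivAt x x' t) (hy : HasDerivAt y y' t)
    (hpx : HasDerivAt px px' t) (hpy : HasDerivAt py py' t)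
    (hρ : x t ^ 2 + y t ^ 2 ≠ 0) :
    HasDerivAt (fun s => HbarCart (x s) (y s) (px s) (py s))
      (px t * px' + py t * py'
        + (x t * py t - y t * px t) * (x' * py t + x t * py' - y' * px t - y t * px')
            / (x t ^ 2 + y t ^ 2)
        - (x t * py t - y t * px t) ^ 2 * (x t * x' + y t * y') / (x t ^ 2 + y t ^ 2) ^ 2) t := by
  have hkin := (((hpx.pow 2).add (hpy.pow 2)).const_mul (1 / 2 : ℝ))
  have hpot := ((((hx.mul hpy).sub (hy.mul hpx)).pow 2).const_mul (1 / 2 : ℝ)).div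
    ((hx.pow 2).add (hy.pow 2)) hρ
  refine (hkin.add hpot).congr_deriv ?_
  simp only [Pi.add_apply, Pi.sub_apply, Pi.mul_apply, Pi.pow_apply]
  field_simp
  ring

section Partials

variable (x y px py : ℝ) (hρ : x ^ 2 + y ^ 2 ≠ 0)
include hρ

theorem deriv_hbarCart_px :
    deriv (fun u => HbarCart x y u py) px = px - y * (x * py - y * px) / (x ^ 2 + y ^ 2) := by
  rw [((hasDerivAt_const px x).hbarCart (hasDerivAt_const px y) (hasDerivAt_id' px)
    (hasDerivAt_const px py) hρ).deriv]
  field_simp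
  ring

theorem deriv_hbarCart_py :
    deriv (fun u => HbarCart x y px u) py = py + x * (x * py - y * px) / (x ^ 2 + y ^ 2) := by
  rw [((hasDerivAt_const py x).hbarCart (hasDerivAt_const py y) (hasDerivAt_const py px)
    (hasDerivAt_id' py) hρ).deriv]
  field_simp
  ring

theorem deriv_hbarCart_x :
    deriv (fun u => HbarCart u y px py) x
      = py * (x * py - y * px) / (x ^ 2 + y ^ 2)
        - x * (x * py - y * px) ^ 2 / (x ^ 2 + y ^ 2) ^ 2 := by
  rw [((hasDerivAt_id' x).hbarCart (hasDerivAt_const x y) (hasDerivAt_const x px)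
    (hasDerivAt_const x py) hρ).deriv]
  field_simp
  ring

theorem deriv_hbarCart_y :
    deriv (fun u => HbarCart x u px py) y
      = -px * (x * py - y * px) / (x ^ 2 + y ^ 2)
        - y * (x * py - y * px) ^ 2 / (x ^ 2 + y ^ 2) ^ 2 := by
  rw [((hasDerivAt_const y x).hbarCart (hasDerivAt_id' y) (hasDerivAt_const y px)
    (hasDerivAt_const y py) hρ).deriv]
  field_simp
  ring

theorem elementary_hbarCart_eq :
    deriv (fun u => HbarCart x y u py) px * deriv (fun u => HbarCart u y px py) x
      + deriv (fun u => HbarCart x y px u) py * deriv (fun u => HbarCart x u px py) y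
      = -2 * (x * py - y * px) ^ 2 * (x * px + y * py) / (x ^ 2 + y ^ 2) ^ 2 := by
  rw [deriv_hbarCart_px x y px py hρ, deriv_hbarCart_py x y px py hρ,
    deriv_hbarCart_x x y px py hρ, deriv_hbarCart_y x y px py hρ]
  field_simp
  ring

end Partials

section Polar

variable (r θ pr pθ : ℝ)

theorem polar_sq_add_sq : (r * Real.cos θ) ^ 2 + (r * Real.sin θ) ^ 2 = r ^ 2 := by
  linear_combination r ^ 2 * Real.cos_sq_add_sin_sq θ

theorem polar_angular_momentum (hr : r ≠ 0) :
    r * Real.cos θ * (pr * Real.sin θ + pθ / r * Real.cos θ)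
      - r * Real.sin θ * (pr * Real.cos θ - pθ / r * Real.sin θ) = pθ := by
  field_simp
  linear_combination pθ * Real.cos_sq_add_sin_sq θ

theorem polar_radial_momentum :
    r * Real.cos θ * (pr * Real.cos θ - pθ / r * Real.sin θ)
      + r * Real.sin θ * (pr * Real.sin θ + pθ / r * Real.cos θ) = r * pr := by
  linear_combination r * pr * Real.cos_sq_add_sin_sq θ

end Polar

/-- for `H(r,p_r,p_θ) = (1/2)(p_r² + 2p_θ²/r²)` on `r > 0` and the (non-affine)
polar-to-Cartesian point transformation, the elementary Hamiltonian `H_p·H_q` is invariant: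
`H̄_p̄·H̄_q̄` computed in Cartesian coordinates equals `p_r · (−2 p_θ²/r³)` at all
corresponding phase-space points, i.e. `δ = 0` for this Hamiltonian. -/
theorem artificial_hamiltonian_invariant_elementary :
    ∀ r θ pr pθ : ℝ, 0 < r →
      (let x := r * Real.cos θ
       let y := r * Real.sin θ
       let px := pr * Real.cos θ - pθ / r * Real.sin θ
       let py := pr * Real.sin θ + pθ / r * Real.cos θ
       deriv (fun u => HbarCart x y u py) px * deriv (fun u => HbarCart u y px py) x
         + deriv (fun u => HbarCart x y px u) py * deriv (fun u => HbarCart x u px py) y)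
        = pr * (-2 * pθ ^ 2 / r ^ 3) := by
  intro r θ pr pθ hr
  have hρ := polar_sq_add_sq r θ
  dsimp only
  rw [elementary_hbarCart_eq _ _ _ _ (by rw [hρ]; positivity),
    polar_angular_momentum r θ pr pθ hr.ne', polar_radial_momentum, hρ]
  field_simp
end

section
/- In d-dimensions with vector field f : ℝᵈ → ℝᵈ and a C² diffeomorphism ψ : ℝᵈ → ℝᵈ, the explicit Euler method applied to the transformed system f̄(ȳ) = (Dψ⁻¹(ȳ))⁻¹ f(ψ⁻¹(ȳ)), pulled back to original coordinates, has distorted vector field f − (h/2)[Df·f + (Dψ⁻¹)·D²ψ(f,f)] + O(h²); hence second-order compensation holds iff Df(y)·f(y) + Dψ⁻¹(ψ(y))·D²ψ(y)(f(y), f(y)) = 0 for all y. As a corollary: if the compensation condition holds, then for each fixed T > 0, the Euler approximation computed in the ψ-coordinates and transformed back satisfies ‖y_n − y(t_n)‖ = O(h²) for t_n = n·h ≤ T. -/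
/-- The explicit Euler step computed in the `ψ`-coordinates and pulled back:
`Φ_h(y) = ψ⁻¹(ψ(y) + h·Dψ(y)f(y))` (since `f̄(ψ y) = Dψ(y) f(y)`). -/
noncomputable def eulerInPsiCoords {d : ℕ} (f ψ ψinv : (Fin d → ℝ) → (Fin d → ℝ))
    (h : ℝ) (y : Fin d → ℝ) : Fin d → ℝ :=
  ψinv (ψ y + h • fderiv ℝ ψ y (f y))

/-- The compensation expression `E(y) = Df(y)·f(y) + Dψ⁻¹(ψ y)·D²ψ(y)(f y, f y)`. -/
noncomputable def compExpr {d : ℕ} (f ψ ψinv : (Fin d → ℝ) → (Fin d → ℝ))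
    (y : Fin d → ℝ) : Fin d → ℝ :=
  fderiv ℝ f y (f y) + fderiv ℝ ψinv (ψ y) ((fderiv ℝ (fun z => fderiv ℝ ψ z) y (f y)) (f y))

/-- the explicit Euler method applied in `ψ`-coordinates and pulled back has
distorted vector field `f − (h/2)[Df·f + Dψ⁻¹·D²ψ(f,f)] + O(h²)`: its local error has
vanishing 0th and 1st order terms in `h` and second-order Taylor coefficient
`−(1/2)E(y)` (i.e. `iteratedDeriv 2` equals `−E(y)`); hence second-order compensation holds
iff `E ≡ 0`, and if `E ≡ 0` then for each fixed `T > 0` the global error on `[0,T]` is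
`O(h²)`. -/
theorem euler_variable_transformation_compensation {d : ℕ}
    (f ψ ψinv : (Fin d → ℝ) → (Fin d → ℝ))
    (hf : ContDiff ℝ (⊤ : ℕ∞) f) (hψ : ContDiff ℝ 2 ψ) (hψinv : ContDiff ℝ 2 ψinv)
    (hleft : Function.LeftInverse ψinv ψ) (hright : Function.RightInverse ψinv ψ)
    (φ : ℝ → (Fin d → ℝ) → (Fin d → ℝ))
    (hφ0 : ∀ y, φ 0 y = y)
    (hφ : ∀ (t : ℝ) (y : Fin d → ℝ), HasDerivAt (fun s => φ s y) (f (φ t y)) t) :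
    (∀ y : Fin d → ℝ,
      eulerInPsiCoords f ψ ψinv 0 y - φ 0 y = 0 ∧
      deriv (fun h => eulerInPsiCoords f ψ ψinv h y - φ h y) 0 = 0 ∧
      iteratedDeriv 2 (fun h => eulerInPsiCoords f ψ ψinv h y - φ h y) 0
        = -(compExpr f ψ ψinv y)) ∧
    ((∀ y : Fin d → ℝ, compExpr f ψ ψinv y = 0) →
      ∀ (T : ℝ) (y₀ : Fin d → ℝ), 0 < T → ∃ C h₀ : ℝ, 0 < h₀ ∧
        ∀ (n : ℕ) (h : ℝ), 0 < h → h ≤ h₀ → (n : ℝ) * h ≤ T →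
          ‖(eulerInPsiCoords f ψ ψinv h)^[n] y₀ - φ ((n : ℝ) * h) y₀‖ ≤ C * h ^ 2) := by
  have hψd : Differentiable ℝ ψ := hψ.differentiable two_ne_zero
  have hψinvd : Differentiable ℝ ψinv := hψinv.differentiable two_ne_zero
  have hfd : Differentiable ℝ f := hf.differentiable (by simp)
  have hψ' : ContDiff ℝ 1 (fun z => fderiv ℝ ψ z) := hψ.fderiv_right (by norm_num)
  have hψinv' : ContDiff ℝ 1 (fun z => fderiv ℝ ψinv z) := hψinv.fderiv_right (by norm_num)
  -- chain rules for the inverse pair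
  have hcompL : ∀ z, (fderiv ℝ ψinv (ψ z)).comp (fderiv ℝ ψ z)
      = ContinuousLinearMap.id ℝ (Fin d → ℝ) := by
    intro z
    have h1 : fderiv ℝ (ψinv ∘ ψ) z = (fderiv ℝ ψinv (ψ z)).comp (fderiv ℝ ψ z) :=
      fderiv_comp z (hψinvd (ψ z)) (hψd z)
    rw [← h1, show ψinv ∘ ψ = id from funext hleft, fderiv_id]
  have hcompR : ∀ z, (fderiv ℝ ψ z).comp (fderiv ℝ ψinv (ψ z))
      = ContinuousLinearMap.id ℝ (Fin d → ℝ) := by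
    intro z
    have h1 : fderiv ℝ (ψ ∘ ψinv) (ψ z) = (fderiv ℝ ψ (ψinv (ψ z))).comp (fderiv ℝ ψinv (ψ z)) :=
      fderiv_comp (ψ z) (hψd (ψinv (ψ z))) (hψinvd (ψ z))
    rw [hleft z] at h1
    rw [← h1, show ψ ∘ ψinv = id from funext hright, fderiv_id]
  have hLapp : ∀ z X, fderiv ℝ ψinv (ψ z) (fderiv ℝ ψ z X) = X := by
    intro z X
    have := congrArg (fun L : (Fin d → ℝ) →L[ℝ] (Fin d → ℝ) => L X) (hcompL z)
    simpa using this
  have hRapp : ∀ z X, fderiv ℝ ψ z (fderiv ℝ ψinv (ψ z) X) = X := by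
    intro z X
    have := congrArg (fun L : (Fin d → ℝ) →L[ℝ] (Fin d → ℝ) => L X) (hcompR z)
    simpa using this
  -- second-derivative identity from differentiating `Dψinv(ψ z) ∘ Dψ(z) = id`
  have hkey : ∀ y : Fin d → ℝ,
      (fderiv ℝ (fun z => fderiv ℝ ψinv z) (ψ y)) (fderiv ℝ ψ y (f y)) (fderiv ℝ ψ y (f y))
      = - (fderiv ℝ ψinv (ψ y)) ((fderiv ℝ (fun z => fderiv ℝ ψ z) y (f y)) (f y)) := by
    intro y
    have hA : HasFDerivAt (fun z => fderiv ℝ ψinv (ψ z))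
        ((fderiv ℝ (fun w => fderiv ℝ ψinv w) (ψ y)).comp (fderiv ℝ ψ y)) y :=
      (hψinv'.differentiable one_ne_zero (ψ y)).hasFDerivAt.comp y (hψd y).hasFDerivAt
    have hB : HasFDerivAt (fun z => fderiv ℝ ψ z)
        (fderiv ℝ (fun z => fderiv ℝ ψ z) y) y :=
      (hψ'.differentiable one_ne_zero y).hasFDerivAt
    have hG := hA.clm_comp hB
    have hG0 : HasFDerivAt (fun z => (fderiv ℝ ψinv (ψ z)).comp (fderiv ℝ ψ z))
        (0 : (Fin d → ℝ) →L[ℝ] ((Fin d → ℝ) →L[ℝ] (Fin d → ℝ))) y := by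
      rw [show (fun z => (fderiv ℝ ψinv (ψ z)).comp (fderiv ℝ ψ z))
          = fun _ => ContinuousLinearMap.id ℝ (Fin d → ℝ) from funext hcompL]
      exact hasFDerivAt_const _ _
    have h0 := congrArg (fun L => (L (f y)) (f y)) (hG.unique hG0)
    simp only [ContinuousLinearMap.add_apply, ContinuousLinearMap.coe_comp',
      Function.comp_apply, ContinuousLinearMap.compL_apply, ContinuousLinearMap.flip_apply,
      ContinuousLinearMap.zero_apply, Pi.zero_apply] at h0
    linear_combination h0
  constructor
  · -- Part 1: local error expansion
    intro y
    have hline : ∀ t : ℝ, HasDerivAt (fun h : ℝ => ψ y + h • fderiv ℝ ψ y (f y))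
        (fderiv ℝ ψ y (f y)) t := by
      intro t
      simpa using ((hasDerivAt_id t).smul_const (fderiv ℝ ψ y (f y))).const_add (ψ y)
    have hu : ∀ t : ℝ, HasDerivAt (fun h : ℝ => eulerInPsiCoords f ψ ψinv h y)
        (fderiv ℝ ψinv (ψ y + t • fderiv ℝ ψ y (f y)) (fderiv ℝ ψ y (f y))) t := by
      intro t
      exact (hψinvd (ψ y + t • fderiv ℝ ψ y (f y))).hasFDerivAt.comp_hasDerivAt t (hline t)
    have hfp : ∀ t : ℝ, HasDerivAt (fun s => f (φ s y))
        (fderiv ℝ f (φ t y) (f (φ t y))) t :=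
      fun t => (hfd (φ t y)).hasFDerivAt.comp_hasDerivAt t (hφ t y)
    have hF : ∀ t : ℝ, HasDerivAt (fun h => eulerInPsiCoords f ψ ψinv h y - φ h y)
        (fderiv ℝ ψinv (ψ y + t • fderiv ℝ ψ y (f y)) (fderiv ℝ ψ y (f y)) - f (φ t y)) t :=
      fun t => (hu t).sub (hφ t y)
    refine ⟨?_, ?_, ?_⟩
    · simp [eulerInPsiCoords, hφ0, hleft y]
    · have := (hF 0).deriv
      rw [this]
      simp [hφ0, hLapp y (f y)]
    · rw [iteratedDeriv_succ, iteratedDeriv_one,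
        show deriv (fun h => eulerInPsiCoords f ψ ψinv h y - φ h y)
          = fun t => fderiv ℝ ψinv (ψ y + t • fderiv ℝ ψ y (f y)) (fderiv ℝ ψ y (f y))
            - f (φ t y) from funext fun t => (hF t).deriv]
      have hc : HasDerivAt (fun t : ℝ => fderiv ℝ ψinv (ψ y + t • fderiv ℝ ψ y (f y)))
          (fderiv ℝ (fun z => fderiv ℝ ψinv z) (ψ y) (fderiv ℝ ψ y (f y))) 0 := by
        have := ((hψinv'.differentiable one_ne_zero (ψ y + (0:ℝ) • fderiv ℝ ψ y (f y))).hasFDerivAt).comp_hasDerivAt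
          (0:ℝ) (hline 0)
        simpa [Function.comp_def] using this
      have hq : HasDerivAt
          (fun t : ℝ => fderiv ℝ ψinv (ψ y + t • fderiv ℝ ψ y (f y)) (fderiv ℝ ψ y (f y)))
          ((fderiv ℝ (fun z => fderiv ℝ ψinv z) (ψ y) (fderiv ℝ ψ y (f y)))
            (fderiv ℝ ψ y (f y))) 0 := by
        simpa using hc.clm_apply (hasDerivAt_const (0:ℝ) (fderiv ℝ ψ y (f y)))
      have hfp0 : HasDerivAt (fun s => f (φ s y)) (fderiv ℝ f y (f y)) 0 := by
        simpa [hφ0] using hfp 0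
      rw [(show HasDerivAt (fun t => fderiv ℝ ψinv (ψ y + t • fderiv ℝ ψ y (f y)) (fderiv ℝ ψ y (f y)) - f (φ t y)) _ 0 from hq.sub hfp0).deriv, hkey y, compExpr]
      abel
  · -- Part 2: with compensation, Euler in ψ-coordinates is exact
    intro hE T y₀ _
    refine ⟨0, 1, one_pos, ?_⟩
    have hr : ∀ t, HasDerivAt (fun s => φ s y₀) (f (φ t y₀)) t := fun t => hφ t y₀
    have hw : ∀ t, HasDerivAt (fun s => fderiv ℝ ψ (φ s y₀) (f (φ s y₀))) 0 t := by
      intro t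
      have hB : HasDerivAt (fun s => fderiv ℝ ψ (φ s y₀))
          ((fderiv ℝ (fun z => fderiv ℝ ψ z) (φ t y₀)) (f (φ t y₀))) t :=
        (hψ'.differentiable one_ne_zero (φ t y₀)).hasFDerivAt.comp_hasDerivAt t (hr t)
      have hfr : HasDerivAt (fun s => f (φ s y₀))
          (fderiv ℝ f (φ t y₀) (f (φ t y₀))) t :=
        (hfd (φ t y₀)).hasFDerivAt.comp_hasDerivAt t (hr t)
      have h1 := hB.clm_apply hfr
      have h3 : (fderiv ℝ (fun z => fderiv ℝ ψ z) (φ t y₀)) (f (φ t y₀)) (f (φ t y₀))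
          + fderiv ℝ ψ (φ t y₀) (fderiv ℝ f (φ t y₀) (f (φ t y₀))) = 0 := by
        have h4 := congrArg (fderiv ℝ ψ (φ t y₀)) (hE (φ t y₀))
        rw [compExpr, map_add, hRapp, map_zero] at h4
        linear_combination h4
      rwa [h3] at h1
    have hwc : ∀ t, fderiv ℝ ψ (φ t y₀) (f (φ t y₀)) = fderiv ℝ ψ y₀ (f y₀) := by
      intro t
      have := is_const_of_deriv_eq_zero (f := fun s => fderiv ℝ ψ (φ s y₀) (f (φ s y₀)))
        (fun s => (hw s).differentiableAt) (fun s => (hw s).deriv) t 0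
      simpa [hφ0] using this
    have haff : ∀ t : ℝ, ψ (φ t y₀) = ψ y₀ + t • fderiv ℝ ψ y₀ (f y₀) := by
      intro t
      have hm : ∀ s : ℝ, HasDerivAt (fun s => ψ (φ s y₀) - s • fderiv ℝ ψ y₀ (f y₀)) 0 s := by
        intro s
        have hc : HasDerivAt (fun s => ψ (φ s y₀)) (fderiv ℝ ψ y₀ (f y₀)) s := by
          have := (hψd (φ s y₀)).hasFDerivAt.comp_hasDerivAt s (hr s)
          rwa [hwc s] at this
        simpa using (show HasDerivAt (fun s => ψ (φ s y₀) - s • fderiv ℝ ψ y₀ (f y₀)) _ s from hc.sub ((hasDerivAt_id s).smul_const (fderiv ℝ ψ y₀ (f y₀))))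
      have h0 := is_const_of_deriv_eq_zero
        (f := fun s : ℝ => ψ (φ s y₀) - s • fderiv ℝ ψ y₀ (f y₀))
        (fun s => (hm s).differentiableAt) (fun s => (hm s).deriv) t 0
      simp only [hφ0, zero_smul, sub_zero] at h0
      rw [sub_eq_iff_eq_add] at h0
      exact h0
    have key : ∀ (n : ℕ) (h : ℝ),
        (eulerInPsiCoords f ψ ψinv h)^[n] y₀ = φ ((n : ℝ) * h) y₀ := by
      intro n
      induction n with
      | zero => intro h; simp [hφ0]
      | succ n ih =>
        intro h
        rw [Function.iterate_succ_apply', ih h, eulerInPsiCoords, hwc ((n : ℝ) * h),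
          haff ((n : ℝ) * h)]
        have hstep : ψ y₀ + ((n : ℝ) * h) • fderiv ℝ ψ y₀ (f y₀) + h • fderiv ℝ ψ y₀ (f y₀)
            = ψ y₀ + (((n : ℕ) + 1 : ℝ) * h) • fderiv ℝ ψ y₀ (f y₀) := by
          rw [show (((n : ℕ) + 1 : ℝ) * h) = (n : ℝ) * h + h by ring, add_smul]
          abel
        rw [hstep, ← haff (((n : ℕ) + 1 : ℝ) * h), hleft]
        push_cast
        ring_nf
    intro n h _ _ _
    rw [key n h]
    simp
end
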